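/- For every instance with two agents having entitlements α₁, α₂ ∈ (0,1) with α₁ + α₂ = 1, nonempty signal sets S₁, S₂, and valuations v₁, v₂ : (S₁×S₂) × 2^M → ℝ≥0 that are monotone and normalized in the set argument for every fixed signal vector, there exists an allocation mechanism 𝓜 such that for every true signal vector s ∈ S₁×S₂ there exists a report vector ((r₁,b₁),(r₂,b₂)) that: (1) is a pure Nash equilibrium; (2) induces an allocation giving agent 2 value at least APS_{α₂}(v₂(s,·)); and (3) if v₁(s,·) is XOS, gives agent 1 value at least α₁·v₁(s,M). -/
import Mathlib


/-- A valuation `v : 2^M → ℝ` is XOS if it is the pointwise maximum of finitely many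
(at least one) nonnegative additive functions. -/
def IsXOS {M : Type*} [Fintype M] (v : Finset M → ℝ) : Prop :=
  ∃ (l : ℕ) (a : Fin (l + 1) → M → ℝ),
    (∀ k j, 0 ≤ a k j) ∧
    ∀ T : Finset M, v T = Finset.univ.sup' Finset.univ_nonempty fun k => ∑ j ∈ T, a k j

/-- The AnyPrice Share of a valuation `v` with entitlement `α`:
`APS_α(v) = inf_{p price vector} max {v T : T ⊆ M, p(T) ≤ α}`, where a price vector is
a nonnegative `p : M → ℝ` summing to `1`. -/
noncomputable def aps {M : Type*} [Fintype M] (α : ℝ) (v : Finset M → ℝ) : ℝ :=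
  sInf {x : ℝ | ∃ p : M → ℝ, (∀ j, 0 ≤ p j) ∧ (∑ j, p j) = 1 ∧
    x = sSup {y : ℝ | ∃ T : Finset M, (∑ j ∈ T, p j) ≤ α ∧ y = v T}}

open Classical in
/-- Among all bundles affordable at prices `q` with budget `α`, one maximizing `w`. -/
noncomputable def bestAfford {M : Type*} [Fintype M] (α : ℝ) (q : M → ℝ) (w : Finset M → ℝ) :
    Finset M :=
  if h : (Finset.univ.filter (fun T : Finset M => ∑ j ∈ T, q j ≤ α)).Nonempty then
    (Finset.exists_max_image _ w h).choose
  else ∅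

theorem bestAfford_spec {M : Type*} [Fintype M] {α : ℝ} (hα : 0 ≤ α) (q : M → ℝ)
    (w : Finset M → ℝ) :
    (∑ j ∈ bestAfford α q w, q j ≤ α) ∧
      ∀ T : Finset M, (∑ j ∈ T, q j ≤ α) → w T ≤ w (bestAfford α q w) := by
  classical
  have hne : (Finset.univ.filter (fun T : Finset M => ∑ j ∈ T, q j ≤ α)).Nonempty :=
    ⟨∅, by simp [hα]⟩
  rw [bestAfford, dif_pos hne]
  obtain ⟨h1, h2⟩ := (Finset.exists_max_image _ w hne).choose_spec
  refine ⟨(Finset.mem_filter.mp h1).2, fun T hT => h2 T (Finset.mem_filter.mpr ⟨Finset.mem_univ _, hT⟩)⟩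


open Classical in
/-- A price vector adapted to an XOS valuation: proportional to a maximizing additive
supporting function at the grand bundle when one exists, uniform otherwise. -/
noncomputable def xprice {M : Type*} [Fintype M] (v : Finset M → ℝ) : M → ℝ :=
  if h : ∃ a : M → ℝ, (∀ j, 0 ≤ a j) ∧ (∀ T : Finset M, ∑ j ∈ T, a j ≤ v T) ∧
      (∑ j, a j) = v Finset.univ ∧ 0 < v Finset.univ then
    fun j => h.choose j / v Finset.univ
  else fun _ => (Fintype.card M : ℝ)⁻¹

theorem xprice_nonneg {M : Type*} [Fintype M] (v : Finset M → ℝ) (j : M) :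
    0 ≤ xprice v j := by
  by_cases h : ∃ a : M → ℝ, (∀ j, 0 ≤ a j) ∧ (∀ T : Finset M, ∑ j ∈ T, a j ≤ v T) ∧
      (∑ j, a j) = v Finset.univ ∧ 0 < v Finset.univ
  · simp only [xprice, dif_pos h]
    exact div_nonneg (h.choose_spec.1 j) h.choose_spec.2.2.2.le
  · simp only [xprice, dif_neg h]
    positivity

theorem xprice_sum {M : Type*} [Fintype M] [Nonempty M] (v : Finset M → ℝ) :
    ∑ j, xprice v j = 1 := by
  by_cases h : ∃ a : M → ℝ, (∀ j, 0 ≤ a j) ∧ (∀ T : Finset M, ∑ j ∈ T, a j ≤ v T) ∧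
      (∑ j, a j) = v Finset.univ ∧ 0 < v Finset.univ
  · simp only [xprice, dif_pos h]
    rw [← Finset.sum_div, h.choose_spec.2.2.1, div_self h.choose_spec.2.2.2.ne']
  · simp only [xprice, dif_neg h]
    rw [Finset.sum_const, nsmul_eq_mul, Finset.card_univ,
      mul_inv_cancel₀ (by exact_mod_cast Fintype.card_ne_zero)]

theorem xprice_spec_pos {M : Type*} [Fintype M] {v : Finset M → ℝ}
    (h : ∃ a : M → ℝ, (∀ j, 0 ≤ a j) ∧ (∀ T : Finset M, ∑ j ∈ T, a j ≤ v T) ∧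
      (∑ j, a j) = v Finset.univ ∧ 0 < v Finset.univ) :
    ∃ a : M → ℝ, (∀ j, 0 ≤ a j) ∧ (∀ T : Finset M, ∑ j ∈ T, a j ≤ v T) ∧
      (∑ j, a j) = v Finset.univ ∧ ∀ j, xprice v j = a j / v Finset.univ :=
  ⟨h.choose, h.choose_spec.1, h.choose_spec.2.1, h.choose_spec.2.2.1,
    fun j => by simp only [xprice, dif_pos h]⟩

theorem isXOS_support {M : Type*} [Fintype M] {v : Finset M → ℝ} (hX : IsXOS v)
    (hV : 0 < v Finset.univ) :
    ∃ a : M → ℝ, (∀ j, 0 ≤ a j) ∧ (∀ T : Finset M, ∑ j ∈ T, a j ≤ v T) ∧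
      (∑ j, a j) = v Finset.univ ∧ 0 < v Finset.univ := by
  obtain ⟨l, a, hnn, hval⟩ := hX
  obtain ⟨k, -, hk⟩ := Finset.exists_mem_eq_sup'
    (Finset.univ_nonempty (α := Fin (l+1)))
    (fun k : Fin (l+1) => ∑ j ∈ (Finset.univ : Finset M), a k j)
  refine ⟨a k, fun j => hnn k j, fun T => ?_, ?_, hV⟩
  · rw [hval T]
    exact Finset.le_sup' (fun k : Fin (l+1) => ∑ j ∈ T, a k j) (Finset.mem_univ k)
  · rw [hval Finset.univ, hk]

/-- For every instance with two agents having entitlements `α₁, α₂ ∈ (0,1)`,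
`α₁ + α₂ = 1`, nonempty signal sets `S₁, S₂`, and interdependent valuations `v₁, v₂`
monotone and normalized (nonnegative) in the set argument, there exist bid sets
`B₁, B₂` and an allocation mechanism `𝓜` (where `𝓜 (r₁,b₁) (r₂,b₂)` is agent 2's
bundle `A₂`, and agent 1 gets `A₁ = A₂ᶜ`) such that for every true signal vector
`(s₁,s₂)` there is a report vector `((r₁,b₁),(r₂,b₂))` that (1) is a pure Nash
equilibrium, (2) gives agent 2 value at least `APS_{α₂}(v₂((s₁,s₂),·))`, and
(3) if `v₁((s₁,s₂),·)` is XOS, gives agent 1 value at least `α₁·v₁((s₁,s₂),M)`. -/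
theorem exists_fair_PNE_mechanism_unequal_entitlements.{u}
    {M : Type*} [Fintype M] [DecidableEq M] {S1 S2 : Type u}
    [Nonempty S1] [Nonempty S2]
    (α1 α2 : ℝ) (hα1 : 0 < α1 ∧ α1 < 1) (hα2 : 0 < α2 ∧ α2 < 1) (hsum : α1 + α2 = 1)
    (v1 v2 : S1 × S2 → Finset M → ℝ)
    (h1mono : ∀ (σ : S1 × S2) (T T' : Finset M), T ⊆ T' → v1 σ T ≤ v1 σ T')
    (h1norm : ∀ σ : S1 × S2, v1 σ ∅ = 0)
    (h1nonneg : ∀ (σ : S1 × S2) (T : Finset M), 0 ≤ v1 σ T)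
    (h2mono : ∀ (σ : S1 × S2) (T T' : Finset M), T ⊆ T' → v2 σ T ≤ v2 σ T')
    (h2norm : ∀ σ : S1 × S2, v2 σ ∅ = 0)
    (h2nonneg : ∀ (σ : S1 × S2) (T : Finset M), 0 ≤ v2 σ T) :
    ∃ (B1 B2 : Type u) (𝓜 : S1 × B1 → S2 × B2 → Finset M),
      ∀ (s1 : S1) (s2 : S2),
        ∃ (r1 : S1) (b1 : B1) (r2 : S2) (b2 : B2),
          -- (1) `((r1,b1),(r2,b2))` is a pure Nash equilibrium w.r.t. `(s1,s2)`
          (∀ (r1' : S1) (b1' : B1),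
              v1 (s1, r2) ((𝓜 (r1', b1') (r2, b2))ᶜ) ≤
                v1 (s1, r2) ((𝓜 (r1, b1) (r2, b2))ᶜ)) ∧
          (∀ (r2' : S2) (b2' : B2),
              v2 (r1, s2) (𝓜 (r1, b1) (r2', b2')) ≤
                v2 (r1, s2) (𝓜 (r1, b1) (r2, b2))) ∧
          -- (2) agent 2 gets at least her AnyPrice Share
          aps α2 (v2 (s1, s2)) ≤ v2 (s1, s2) (𝓜 (r1, b1) (r2, b2)) ∧
          -- (3) if agent 1's valuation is XOS she gets her proportional share
          (IsXOS (v1 (s1, s2)) →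
            α1 * v1 (s1, s2) (Finset.univ : Finset M) ≤
              v1 (s1, s2) ((𝓜 (r1, b1) (r2, b2))ᶜ)) := by
  
  classical
  obtain ⟨hα1pos, hα1lt⟩ := hα1
  obtain ⟨hα2pos, hα2lt⟩ := hα2
  set e := Fintype.equivFin (Finset M) with he
  set mech : S1 × (S1 × S2) → S2 × ((S1 × S2) → ULift.{u} (Fin (Fintype.card (Finset M)))) →
      Finset M :=
    fun x y =>
      if ∑ j ∈ e.symm (y.2 x.2).down, xprice (v1 x.2) j ≤ α2 then e.symm (y.2 x.2).down else ∅
    with hmech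
  refine ⟨S1 × S2, (S1 × S2) → ULift.{u} (Fin (Fintype.card (Finset M))), mech, ?_⟩
  intro s1 s2
  set g : S1 × S2 → Finset M :=
    fun σ => bestAfford α2 (xprice (v1 σ)) (v2 (s1, s2)) with hg
  have hgafford : ∀ σ : S1 × S2, ∑ j ∈ g σ, xprice (v1 σ) j ≤ α2 := fun σ =>
    (bestAfford_spec hα2pos.le (xprice (v1 σ)) (v2 (s1, s2))).1
  have hgmax : ∀ (σ : S1 × S2) (T : Finset M),
      (∑ j ∈ T, xprice (v1 σ) j) ≤ α2 → v2 (s1, s2) T ≤ v2 (s1, s2) (g σ) :=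
    fun σ => (bestAfford_spec hα2pos.le (xprice (v1 σ)) (v2 (s1, s2))).2
  obtain ⟨T0, hT0mem, hT0max⟩ := Finset.exists_max_image
    (Finset.univ.filter fun T : Finset M => ∃ σ : S1 × S2, g σ = T)
    (fun T => v1 (s1, s2) Tᶜ)
    ⟨g (s1, s2), Finset.mem_filter.mpr ⟨Finset.mem_univ _, (s1, s2), rfl⟩⟩
  obtain ⟨σs, hσs⟩ := (Finset.mem_filter.mp hT0mem).2
  have hmaxall : ∀ σ : S1 × S2, v1 (s1, s2) ((g σ)ᶜ) ≤ v1 (s1, s2) ((g σs)ᶜ) := fun σ => by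
    rw [hσs]
    exact hT0max _ (Finset.mem_filter.mpr ⟨Finset.mem_univ _, σ, rfl⟩)
  set bb : (S1 × S2) → ULift.{u} (Fin (Fintype.card (Finset M))) :=
    fun σ => ULift.up (e (g σ)) with hbb
  have key : ∀ (x1 : S1) (b1' : S1 × S2), mech (x1, b1') (s2, bb) = g b1' := by
    intro x1 b1'
    rw [hmech, hbb]
    simp only [Equiv.symm_apply_apply]
    exact if_pos (hgafford b1')
  refine ⟨s1, σs, s2, bb, ?_, ?_, ?_, ?_⟩
  · -- (1) agent 1 PNE
    intro r1' b1'
    rw [key r1' b1', key s1 σs]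
    exact hmaxall b1'
  · -- agent 2 PNE
    intro r2' b2'
    rw [key s1 σs, hmech]
    simp only
    split_ifs with h
    · exact hgmax σs _ h
    · exact hgmax σs ∅ (by simpa using hα2pos.le)
  · -- (2) APS guarantee
    rw [key s1 σs]
    rcases isEmpty_or_nonempty M with hM | hM
    · have hset : {x : ℝ | ∃ p : M → ℝ, (∀ j, 0 ≤ p j) ∧ (∑ j, p j) = 1 ∧
          x = sSup {y : ℝ | ∃ T : Finset M, (∑ j ∈ T, p j) ≤ α2 ∧ y = v2 (s1, s2) T}} = ∅ := by
        ext x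
        simp only [Set.mem_setOf_eq, Set.mem_empty_iff_false, iff_false]
        rintro ⟨p, -, hp1, -⟩
        rw [Finset.univ_eq_empty, Finset.sum_empty] at hp1
        norm_num at hp1
      have : aps α2 (v2 (s1, s2)) = 0 := by
        rw [aps, hset, Real.sInf_empty]
      rw [this]
      exact h2nonneg _ _
    · set p : M → ℝ := xprice (v1 σs) with hp
      have hbddS : ∀ q : M → ℝ, BddAbove
          {y : ℝ | ∃ T : Finset M, (∑ j ∈ T, q j) ≤ α2 ∧ y = v2 (s1, s2) T} := by
        intro q
        refine Set.Finite.bddAbove (Set.Finite.subset (Set.finite_range (v2 (s1, s2))) ?_)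
        rintro y ⟨T, -, rfl⟩
        exact ⟨T, rfl⟩
      have hbdd0 : BddBelow {x : ℝ | ∃ p : M → ℝ, (∀ j, 0 ≤ p j) ∧ (∑ j, p j) = 1 ∧
          x = sSup {y : ℝ | ∃ T : Finset M, (∑ j ∈ T, p j) ≤ α2 ∧ y = v2 (s1, s2) T}} := by
        refine ⟨0, ?_⟩
        rintro x ⟨q, hq0, hq1, rfl⟩
        have hmem : v2 (s1, s2) ∅ ∈
            {y : ℝ | ∃ T : Finset M, (∑ j ∈ T, q j) ≤ α2 ∧ y = v2 (s1, s2) T} :=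
          ⟨∅, by simpa using hα2pos.le, rfl⟩
        have := le_csSup (hbddS q) hmem
        rw [h2norm] at this
        exact this
      have hmem : sSup {y : ℝ | ∃ T : Finset M, (∑ j ∈ T, p j) ≤ α2 ∧ y = v2 (s1, s2) T} ∈
          {x : ℝ | ∃ p : M → ℝ, (∀ j, 0 ≤ p j) ∧ (∑ j, p j) = 1 ∧
            x = sSup {y : ℝ | ∃ T : Finset M, (∑ j ∈ T, p j) ≤ α2 ∧ y = v2 (s1, s2) T}} :=
        ⟨p, fun j => xprice_nonneg _ j, xprice_sum _, rfl⟩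
      have h1 : aps α2 (v2 (s1, s2)) ≤
          sSup {y : ℝ | ∃ T : Finset M, (∑ j ∈ T, p j) ≤ α2 ∧ y = v2 (s1, s2) T} :=
        csInf_le hbdd0 hmem
      have h2 : sSup {y : ℝ | ∃ T : Finset M, (∑ j ∈ T, p j) ≤ α2 ∧ y = v2 (s1, s2) T} ≤
          v2 (s1, s2) (g σs) := by
        refine csSup_le ⟨v2 (s1, s2) ∅, ∅, by simpa using hα2pos.le, rfl⟩ ?_
        rintro y ⟨T, hT, rfl⟩
        exact hgmax σs T hT
      exact h1.trans h2
  · -- (3) XOS proportional-share guarantee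
    intro hX
    rw [key s1 σs]
    by_cases hV : 0 < v1 (s1, s2) Finset.univ
    · obtain ⟨a, ha0, hale, hasum, hapx⟩ := xprice_spec_pos (isXOS_support hX hV)
      have haff : (∑ j ∈ g (s1, s2), a j) / v1 (s1, s2) Finset.univ ≤ α2 := by
        rw [Finset.sum_div]
        calc ∑ j ∈ g (s1, s2), a j / v1 (s1, s2) Finset.univ
            = ∑ j ∈ g (s1, s2), xprice (v1 (s1, s2)) j :=
              Finset.sum_congr rfl fun j _ => (hapx j).symm
          _ ≤ α2 := hgafford (s1, s2)
      have hsum1 : ∑ j ∈ g (s1, s2), a j ≤ α2 * v1 (s1, s2) Finset.univ := by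
        have := (div_le_iff₀ hV).mp haff
        linarith
      have hcompl : ∑ j ∈ g (s1, s2), a j + ∑ j ∈ (g (s1, s2))ᶜ, a j = ∑ j, a j :=
        Finset.sum_add_sum_compl _ _
      have hkey : α1 * v1 (s1, s2) Finset.univ ≤ ∑ j ∈ (g (s1, s2))ᶜ, a j := by
        have hα1eq : α1 * v1 (s1, s2) Finset.univ =
            v1 (s1, s2) Finset.univ - α2 * v1 (s1, s2) Finset.univ := by
          have h' : α1 = 1 - α2 := by linarith
          rw [h']; ring
        linarith [hasum, hsum1, hcompl]
      calc α1 * v1 (s1, s2) Finset.univ ≤ ∑ j ∈ (g (s1, s2))ᶜ, a j := hkey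
        _ ≤ v1 (s1, s2) ((g (s1, s2))ᶜ) := hale _
        _ ≤ v1 (s1, s2) ((g σs)ᶜ) := hmaxall (s1, s2)
    · have h0 : v1 (s1, s2) Finset.univ = 0 :=
        le_antisymm (not_lt.mp hV) (h1nonneg _ _)
      rw [h0, mul_zero]
      exact h1nonneg _ _
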